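/- arXiv:2307.16475 — 2 statements merged into one kernel-verified Lean document; each statement's English description precedes it below -/
import Mathlib

section
/- Let B be a commutative semilocal ring all of whose residue fields at maximal ideals are infinite, and let f ∈ B[x₁,…,x_n] be a polynomial whose image in (B/m)[x₁,…,x_n] is nonzero for every maximal ideal m of B. Then there exists a ∈ B^n with f(a) a unit of B. -/
/-!
Over each residue field `B ⧸ m`, which is infinite, the nonzero reduction of `f` is a nonzero
function, so it has a non-root `xₘ`. Since there are finitely many maximal ideals and distinct
ones are coprime, the Chinese remainder theorem lifts the points `xₘ` to a single `a ∈ Bⁿ`.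
Then `f(a)` reduces to `f(xₘ) ≠ 0` modulo every `m`, so it lies in no maximal ideal and is
a unit.
-/

open MvPolynomial

theorem MvPolynomial.exists_eval_ne_zero_of_ne_zero {K σ : Type*} [CommRing K] [IsDomain K]
    [Infinite K] {p : MvPolynomial σ K} (hp : p ≠ 0) : ∃ x : σ → K, eval x p ≠ 0 := by
  contrapose! hp
  exact funext fun x => by simpa using hp x

theorem isUnit_of_forall_isMaximal_notMem {R : Type*} [CommRing R] {r : R}
    (h : ∀ I : Ideal R, I.IsMaximal → r ∉ I) : IsUnit r := by
  by_contra hr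
  obtain ⟨I, hI, hrI⟩ := exists_max_ideal_of_mem_nonunits hr
  exact h I hI hrI

theorem Ideal.exists_forall_mk_eq_of_finite_isMaximal {R : Type*} [CommRing R]
    (hfin : {I : Ideal R | I.IsMaximal}.Finite)
    (x : ∀ I : {I : Ideal R | I.IsMaximal}, R ⧸ (I : Ideal R)) :
    ∃ r : R, ∀ I : {I : Ideal R | I.IsMaximal}, Ideal.Quotient.mk (I : Ideal R) r = x I :=
  have : Finite {I : Ideal R | I.IsMaximal} := hfin
  Ideal.pi_quotient_surjective
    (fun I J hIJ => Ideal.isCoprime_iff_sup_eq.mpr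
      (Ideal.IsMaximal.coprime_of_ne I.2 J.2 (Subtype.coe_injective.ne hIJ))) x

theorem MvPolynomial.exists_isUnit_eval_of_finite_isMaximal {R σ : Type*} [CommRing R]
    (hfin : {I : Ideal R | I.IsMaximal}.Finite) (p : MvPolynomial σ R)
    (hp : ∀ I : {I : Ideal R | I.IsMaximal},
      ∃ x : σ → R ⧸ (I : Ideal R), eval x (map (Ideal.Quotient.mk (I : Ideal R)) p) ≠ 0) :
    ∃ a : σ → R, IsUnit (eval a p) := by
  choose x hx using hp
  choose a ha using fun i : σ =>
    Ideal.exists_forall_mk_eq_of_finite_isMaximal hfin (fun I => x I i)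
  refine ⟨a, isUnit_of_forall_isMaximal_notMem fun I hI hmem => hx ⟨I, hI⟩ ?_⟩
  have hxa : x ⟨I, hI⟩ = Ideal.Quotient.mk I ∘ a :=
    _root_.funext fun i => (ha i ⟨I, hI⟩).symm
  rw [hxa, eval_map, ← eval₂_comp]
  exact Ideal.Quotient.eq_zero_iff_mem.mpr hmem

/-- Let `B` be a commutative semilocal ring whose residue fields at maximal ideals are all
infinite, and let `f` be a polynomial over `B` whose reduction modulo every maximal ideal
is nonzero. Then `f` takes a unit value at some point of `B^n`. -/
theorem stmt14 (B : Type*) [CommRing B] (hfin : {I : Ideal B | I.IsMaximal}.Finite)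
    (hinf : ∀ I : Ideal B, I.IsMaximal → Infinite (B ⧸ I)) (n : ℕ)
    (f : MvPolynomial (Fin n) B)
    (hf : ∀ I : Ideal B, I.IsMaximal →
      MvPolynomial.map (Ideal.Quotient.mk I) f ≠ 0) :
    ∃ a : Fin n → B, IsUnit (MvPolynomial.eval a f) := by
  refine exists_isUnit_eval_of_finite_isMaximal hfin f fun ⟨I, hI⟩ => ?_
  have : I.IsMaximal := hI
  have := hinf I hI
  exact exists_eval_ne_zero_of_ne_zero (hf I hI)
end

section
/- Let G be a group acting on a set X and suppose for some x₀ ∈ X the orbit map is surjective (the action is transitive) with stabilizer H. Let W = N_G(H)/H act on the right of X via the identification X ≅ G/H (i.e. (g·x₀)·[n] := gn·x₀, which is well defined). Then two points x, y ∈ X lie in the same W-orbit if and only if Stab_G(x) = Stab_G(y). -/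
/-! The stabilizer of `g • x₀` is `gHg⁻¹`, so `g • x₀` and `k • x₀` have the same stabilizer
exactly when `g⁻¹k` normalizes `H`, i.e. when `k • x₀ = (g • x₀) · [g⁻¹k]`. -/

namespace MulAction

variable {G α : Type*} [Group G] [MulAction G α]

theorem smul_eq_smul_iff_inv_mul_mem_stabilizer {g g' : G} {a : α} :
    g • a = g' • a ↔ g'⁻¹ * g ∈ stabilizer G a := by
  rw [mem_stabilizer_iff, mul_smul, inv_smul_eq_iff]

theorem mul_smul_eq_mul_smul_of_mem_normalizer {a : α} {n : G}
    (hn : n ∈ Subgroup.normalizer (stabilizer G a : Set G)) {g g' : G} (h : g • a = g' • a) :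
    (g * n) • a = (g' * n) • a := by
  rw [smul_eq_smul_iff_inv_mul_mem_stabilizer] at h ⊢
  simpa only [mul_inv_rev, mul_assoc] using (Subgroup.mem_normalizer_iff''.mp hn _).mp h

theorem stabilizer_smul_eq_stabilizer_smul_iff (g : G) (b c : α) :
    stabilizer G (g • b) = stabilizer G (g • c) ↔ stabilizer G b = stabilizer G c := by
  rw [stabilizer_smul_eq_stabilizer_map_conj, stabilizer_smul_eq_stabilizer_map_conj]
  exact (Subgroup.map_injective (MulEquiv.injective _)).eq_iff

theorem stabilizer_smul_eq_stabilizer_iff_mem_normalizer (n : G) (a : α) :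
    stabilizer G (n • a) = stabilizer G a ↔
      n ∈ Subgroup.normalizer (stabilizer G a : Set G) := by
  rw [stabilizer_smul_eq_stabilizer_map_conj, Subgroup.mem_normalizer_iff_map_conj_eq]
  rfl

theorem stabilizer_smul_eq_stabilizer_smul_iff_inv_mul_mem_normalizer (g k : G) (a : α) :
    stabilizer G (g • a) = stabilizer G (k • a) ↔
      g⁻¹ * k ∈ Subgroup.normalizer (stabilizer G a : Set G) := by
  rw [← stabilizer_smul_eq_stabilizer_iff_mem_normalizer,
    ← stabilizer_smul_eq_stabilizer_smul_iff g ((g⁻¹ * k) • a) a, smul_smul,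
    mul_inv_cancel_left, eq_comm]

end MulAction

open MulAction in
/-- Let `G` act transitively on `X` with `x₀ ∈ X`, `H = Stab_G(x₀)`, and let
`W = N_G(H)/H` act on the right of `X` by `(g • x₀) · [n] = (gn) • x₀`. This action is
well defined, and two points of `X` lie in the same `W`-orbit iff they have the same
stabilizer. -/
theorem stmt19 (G X : Type*) [Group G] [MulAction G X]
    (htrans : ∀ x y : X, ∃ g : G, g • x = y) (x₀ : X) :
    (∀ n ∈ Subgroup.normalizer (MulAction.stabilizer G x₀ : Set G), ∀ g g' : G,
      g • x₀ = g' • x₀ → (g * n) • x₀ = (g' * n) • x₀) ∧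
    (∀ x y : X,
      (∃ n ∈ Subgroup.normalizer (MulAction.stabilizer G x₀ : Set G),
        ∃ g : G, g • x₀ = x ∧ (g * n) • x₀ = y) ↔
      MulAction.stabilizer G x = MulAction.stabilizer G y) := by
  refine ⟨fun n hn g g' ↦ mul_smul_eq_mul_smul_of_mem_normalizer hn, fun x y ↦ ⟨?_, ?_⟩⟩
  · rintro ⟨n, hn, g, rfl, rfl⟩
    rwa [stabilizer_smul_eq_stabilizer_smul_iff_inv_mul_mem_normalizer, inv_mul_cancel_left]
  · obtain ⟨g, rfl⟩ := htrans x₀ x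
    obtain ⟨k, rfl⟩ := htrans x₀ y
    intro h
    refine ⟨g⁻¹ * k, ?_, g, rfl, by rw [mul_inv_cancel_left]⟩
    exact (stabilizer_smul_eq_stabilizer_smul_iff_inv_mul_mem_normalizer g k x₀).mp h
end
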